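/- Let X = [0,4] be equipped with the usual metric and T : X → X defined by Tx = 2 if x ≤ 2 and Tx = 0 if x > 2. Then the function x ↦ M₁(x,2) does not tend to 0 as x → 2; indeed, for x ≤ 2 one has d(Tx,T·2) = 0 and 0 < M₁(x,2) whenever x ≠ 2, while for x > 2 one has d(Tx,T·2) = 2 and M₁(x,2) > 2. -/

import Mathlib

/-!
At the fixed point `2` of `T14`, `M₁(x,2)` reduces to `max (d(x,2)) (d(x,Tx))`. For `x ≤ 2` this is
`2 - x`, positive off `2`; for `x > 2` it is `d(x,0) = x > 2`, and such `x` accumulate at `2`, so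
`M₁(·,2)` cannot tend to `0`.
-/

/-- The number `M₁(x,y)` associated to a self-mapping `T` of a metric space. -/
noncomputable def M1 {X : Type*} [MetricSpace X] (T : X → X) (x y : X) : ℝ :=
  max (max (max (dist x y) (dist x (T x)))
      (max (dist y (T y)) (dist x (T x) * dist y (T y) / (1 + dist x y))))
    (dist x (T x) * dist y (T y) / (1 + dist (T x) (T y)))

/-- The self-mapping of `[0,4]` given by `Tx = 2` if `x ≤ 2` and `Tx = 0` if `x > 2`. -/
noncomputable def T14 : Set.Icc (0 : ℝ) 4 → Set.Icc (0 : ℝ) 4 :=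
  fun x => if (x : ℝ) ≤ 2 then ⟨2, by norm_num⟩ else ⟨0, by norm_num⟩

open Filter Topology Function

theorem M1_of_isFixedPt {X : Type*} [MetricSpace X] {T : X → X} {y : X} (hy : IsFixedPt T y)
    (x : X) : M1 T x y = max (dist x y) (dist x (T x)) := by
  have h0 : 0 ≤ max (dist x y) (dist x (T x)) := le_max_of_le_left dist_nonneg
  simp only [M1, hy.eq, dist_self, mul_zero, zero_div, max_self, max_eq_left h0]

theorem T14_of_le {x : Set.Icc (0 : ℝ) 4} (hx : (x : ℝ) ≤ 2) : T14 x = ⟨2, by norm_num⟩ :=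
  if_pos hx

theorem T14_of_gt {x : Set.Icc (0 : ℝ) 4} (hx : 2 < (x : ℝ)) : T14 x = ⟨0, by norm_num⟩ :=
  if_neg hx.not_ge

theorem isFixedPt_T14_two : IsFixedPt T14 ⟨2, by norm_num⟩ :=
  T14_of_le le_rfl

theorem M1_T14_two_of_le {x : Set.Icc (0 : ℝ) 4} (hx : (x : ℝ) ≤ 2) :
    M1 T14 x ⟨2, by norm_num⟩ = 2 - x := by
  rw [M1_of_isFixedPt isFixedPt_T14_two, T14_of_le hx, max_self, Subtype.dist_eq,
    Real.dist_eq, abs_of_nonpos (by linarith), neg_sub]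

theorem M1_T14_two_of_gt {x : Set.Icc (0 : ℝ) 4} (hx : 2 < (x : ℝ)) :
    M1 T14 x ⟨2, by norm_num⟩ = x := by
  rw [M1_of_isFixedPt isFixedPt_T14_two, T14_of_gt hx, Subtype.dist_eq, Subtype.dist_eq,
    Real.dist_eq, Real.dist_eq, abs_of_pos (by linarith), sub_zero, abs_of_pos (by linarith)]
  exact max_eq_right (by linarith)

theorem frequently_two_lt_nhds_two :
    ∃ᶠ x : Set.Icc (0 : ℝ) 4 in 𝓝 ⟨2, by norm_num⟩, 2 < (x : ℝ) := by
  rw [nhds_subtype_eq_comap, frequently_comap]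
  have h : ∀ᶠ t in 𝓝[>] (2 : ℝ), t ∈ Set.Ioo 2 4 := Ioo_mem_nhdsGT (by norm_num)
  refine (h.frequently.filter_mono nhdsWithin_le_nhds).mono fun t ht => ?_
  exact ⟨⟨t, by linarith [ht.1], ht.2.le⟩, rfl, ht.1⟩

theorem stmt_14 :
    ¬ Filter.Tendsto (fun x : Set.Icc (0 : ℝ) 4 => M1 T14 x ⟨2, by norm_num⟩)
        (nhds ⟨2, by norm_num⟩) (nhds 0) ∧
    (∀ x : Set.Icc (0 : ℝ) 4, (x : ℝ) ≤ 2 →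
      dist (T14 x) (T14 ⟨2, by norm_num⟩) = 0 ∧
        (x ≠ ⟨2, by norm_num⟩ → 0 < M1 T14 x ⟨2, by norm_num⟩)) ∧
    (∀ x : Set.Icc (0 : ℝ) 4, 2 < (x : ℝ) →
      dist (T14 x) (T14 ⟨2, by norm_num⟩) = 2 ∧ 2 < M1 T14 x ⟨2, by norm_num⟩) := by
  refine ⟨fun h => ?_, fun x hx => ⟨?_, fun hne => ?_⟩, fun x hx => ⟨?_, ?_⟩⟩
  · have hsmall := h.eventually (gt_mem_nhds (by norm_num : (0 : ℝ) < 2))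
    obtain ⟨x, hx, hMx⟩ := (frequently_two_lt_nhds_two.and_eventually hsmall).exists
    rw [M1_T14_two_of_gt hx] at hMx
    linarith
  · rw [T14_of_le hx, isFixedPt_T14_two.eq, dist_self]
  · have hlt : (x : ℝ) < 2 := hx.lt_of_ne fun h => hne (Subtype.ext h)
    rw [M1_T14_two_of_le hx]
    linarith
  · rw [T14_of_gt hx, isFixedPt_T14_two.eq, Subtype.dist_eq]
    norm_num
  · rwa [M1_T14_two_of_gt hx]
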